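/- If L ⊆ binom(X,2) is an edge-weight lasso for a binary X-tree T, then the graph Γ(L) = (X, L) is connected. -/

import Mathlib

/- Common definitions for formalizing results of Dress, Huber & Steel,
   "Lassoing a phylogenetic tree I: Basic properties, shellings, and covers".

   Trees are modelled as simple graphs on an ambient vertex type `U`;
   the vertex set of the tree is the support of the graph (every vertex of a
   tree with at least two vertices has degree >= 1). -/

noncomputable section
open scoped Classical

namespace Lasso

variable {U : Type}

/-- The degree of a vertex. -/
def deg (G : SimpleGraph U) (v : U) : ℕ := (G.neighborSet v).ncard

/-- A leaf is a vertex of degree `1`. -/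
def IsLeaf (G : SimpleGraph U) (v : U) : Prop := deg G v = 1

/-- An interior vertex: a non-leaf vertex of the tree. -/
def Interior (G : SimpleGraph U) (v : U) : Prop := v ∈ G.support ∧ ¬ IsLeaf G v

/-- `G` is an `X`-tree: a finite tree without vertices of degree two whose
    leaf set is exactly `X`. -/
structure IsXTree (X : Set U) (G : SimpleGraph U) : Prop where
  support_finite : G.support.Finite
  support_nonempty : G.support.Nonempty
  connected : ∀ a ∈ G.support, ∀ b ∈ G.support, G.Reachable a b
  acyclic : G.IsAcyclic
  no_deg_two : ∀ v : U, deg G v ≠ 2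
  leaves_eq : X = {v : U | IsLeaf G v}

/-- An edge weighting of `G`: nonnegative, and zero away from the edges of `G`
    (so that it represents an element of `ℝ_{≥0}^E`). -/
structure IsWeighting (G : SimpleGraph U) (ω : Sym2 U → ℝ) : Prop where
  nonneg : ∀ e, 0 ≤ ω e
  zero_off : ∀ e, e ∉ G.edgeSet → ω e = 0

/-- A proper edge weighting: in addition strictly positive on interior edges
    (edges both of whose endpoints are non-leaves). -/
structure IsProperWeighting (G : SimpleGraph U) (ω : Sym2 U → ℝ)
    extends IsWeighting G ω : Prop where
  interior_pos : ∀ e ∈ G.edgeSet, (∀ u ∈ e, ¬ IsLeaf G u) → 0 < ω e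

/-- The set `E_T(x|y)` of edges separating `x` from `y`, i.e. the edges lying
    on every walk from `x` to `y` (in a tree: the edges of the path). -/
def pathEdges (G : SimpleGraph U) (x y : U) : Set (Sym2 U) :=
  {e | e ∈ G.edgeSet ∧ ∀ p : G.Walk x y, e ∈ p.edges}

/-- The induced distance `D_ω(x,y)`. -/
def tdist (G : SimpleGraph U) (ω : Sym2 U → ℝ) (x y : U) : ℝ :=
  ∑ᶠ e ∈ pathEdges G x y, ω e

/-- Path edge set of an unordered pair. -/
def pairPathEdges (G : SimpleGraph U) (c : Sym2 U) : Set (Sym2 U) :=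
  {e | e ∈ G.edgeSet ∧ ∀ x y : U, c = s(x, y) → ∀ p : G.Walk x y, e ∈ p.edges}

/-- `D_ω` on an unordered pair (a cord); `λ^T_c(ω)`. -/
def pdist (G : SimpleGraph U) (ω : Sym2 U → ℝ) (c : Sym2 U) : ℝ :=
  ∑ᶠ e ∈ pairPathEdges G c, ω e

/-- `(G,ω)` and `(G',ω')` are `L`-isometric. -/
def LIso (L : Set (Sym2 U)) (G : SimpleGraph U) (ω : Sym2 U → ℝ)
    (G' : SimpleGraph U) (ω' : Sym2 U → ℝ) : Prop :=
  ∀ x y : U, s(x, y) ∈ L → tdist G ω x y = tdist G' ω' x y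

/-- `L` is a set of cords of `X`: 2-element subsets of `X`. -/
def IsCordSet (X : Set U) (L : Set (Sym2 U)) : Prop :=
  ∀ c ∈ L, ¬ c.IsDiag ∧ ∀ u ∈ c, u ∈ X

/-- The union of all cords in `L`. -/
def cup (L : Set (Sym2 U)) : Set U := {v | ∃ c ∈ L, v ∈ c}

/-- `L` is an edge-weight lasso for `G`. -/
def EdgeWeightLasso (G : SimpleGraph U) (L : Set (Sym2 U)) : Prop :=
  ∀ ω ω' : Sym2 U → ℝ, IsProperWeighting G ω → IsProperWeighting G ω' →
    LIso L G ω G ω' → ω = ω'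

/-- `G ≃ G'` via a graph isomorphism fixing `X` pointwise. -/
def FixingIso (X : Set U) (G G' : SimpleGraph U) : Prop :=
  ∃ φ : G ≃g G', ∀ x ∈ X, φ x = x

/-- `(G,ω)` and `(G',ω')` are isometric: a graph isomorphism fixing `X`
    pointwise and preserving edge weights. -/
def FixingIsometry (X : Set U) (G G' : SimpleGraph U) (ω ω' : Sym2 U → ℝ) : Prop :=
  ∃ φ : G ≃g G', (∀ x ∈ X, φ x = x) ∧
    ∀ e ∈ G.edgeSet, ω' (Sym2.map (fun u => φ u) e) = ω e

/-- `L` is a topological lasso for the `X`-tree `G`. -/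
def TopologicalLasso (X : Set U) (G : SimpleGraph U) (L : Set (Sym2 U)) : Prop :=
  ∀ G' : SimpleGraph U, IsXTree X G' →
    ∀ ω ω' : Sym2 U → ℝ, IsProperWeighting G ω → IsProperWeighting G' ω' →
      LIso L G ω G' ω' → FixingIso X G G'

/-- `L` is a strong lasso for the `X`-tree `G`. -/
def StrongLasso (X : Set U) (G : SimpleGraph U) (L : Set (Sym2 U)) : Prop :=
  ∀ G' : SimpleGraph U, IsXTree X G' →
    ∀ ω ω' : Sym2 U → ℝ, IsProperWeighting G ω → IsProperWeighting G' ω' →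
      LIso L G ω G' ω' → FixingIsometry X G G' ω ω'

/-- `G` displays the quartet `a a' ‖ b b'`: some edge lies on all four paths
    joining `a` or `a'` to `b` or `b'`. -/
def DisplaysQ (G : SimpleGraph U) (a a' b b' : U) : Prop :=
  ∃ e : Sym2 U, e ∈ pathEdges G a b ∧ e ∈ pathEdges G a b' ∧
    e ∈ pathEdges G a' b ∧ e ∈ pathEdges G a' b'

def Distinct4 (a b c d : U) : Prop :=
  a ≠ b ∧ a ≠ c ∧ a ≠ d ∧ b ≠ c ∧ b ≠ d ∧ c ≠ d

/-- `a a' ‖ b b' ∈ Q(G)`: a quartet on four distinct elements of `X`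
    displayed by `G`. -/
def QuartetOf (X : Set U) (G : SimpleGraph U) (a a' b b' : U) : Prop :=
  a ∈ X ∧ a' ∈ X ∧ b ∈ X ∧ b' ∈ X ∧ Distinct4 a a' b b' ∧ DisplaysQ G a a' b b'

/-- `G` displays `a a' | b b'`: it displays neither `a b ‖ a' b'` nor
    `a b' ‖ a' b`. -/
def DisplaysBar (G : SimpleGraph U) (a a' b b' : U) : Prop :=
  ¬ DisplaysQ G a b a' b' ∧ ¬ DisplaysQ G a b' a' b

/-- `A, B` is a virtual `T`-split of `X`. -/
def VirtualSplit (X : Set U) (G : SimpleGraph U) (A B : Set U) : Prop :=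
  A.Nonempty ∧ B.Nonempty ∧ Disjoint A B ∧ A ∪ B = X ∧
    ∀ a ∈ A, ∀ a' ∈ A, ∀ b ∈ B, ∀ b' ∈ B, a ≠ a' → b ≠ b' → DisplaysBar G a a' b b'

/-- `G ≤ G'` (`G'` refines `G`), via the standard characterization
    `Q(T) ⊆ Q(T')` of refinement of `X`-trees. -/
def Refines (X : Set U) (G G' : SimpleGraph U) : Prop :=
  ∀ a a' b b' : U, QuartetOf X G a a' b b' → QuartetOf X G' a a' b b'

/-- `L` is a weak lasso for (coralls) the `X`-tree `G`. -/
def WeakLasso (X : Set U) (G : SimpleGraph U) (L : Set (Sym2 U)) : Prop :=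
  ∀ G' : SimpleGraph U, IsXTree X G' →
    ∀ ω ω' : Sym2 U → ℝ, IsProperWeighting G ω → IsProperWeighting G' ω' →
      LIso L G ω G' ω' → Refines X G G'

/-- The subgraph induced on a vertex set `A`. -/
def restrict {α : Type*} (Γ : SimpleGraph α) (A : Set α) : SimpleGraph α where
  Adj u v := Γ.Adj u v ∧ u ∈ A ∧ v ∈ A
  symm := ⟨by rintro u v ⟨h, hu, hv⟩; exact ⟨h.symm, hv, hu⟩⟩
  loopless := ⟨by rintro v ⟨h, _, _⟩; exact Γ.irrefl h⟩

/-- The restriction of `Γ` to `A` is a connected graph. -/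
def ConnectedOn {α : Type*} (Γ : SimpleGraph α) (A : Set α) : Prop :=
  ∀ x ∈ A, ∀ y ∈ A, (restrict Γ A).Reachable x y

/-- The connected component of `x` in `Γ` is bipartite. -/
def ComponentBipartite {α : Type*} (Γ : SimpleGraph α) (x : α) : Prop :=
  ∃ f : α → Bool, ∀ u v : α, Γ.Reachable x u → Γ.Adj u v → f u ≠ f v

/-- No connected component (of the graph with vertex set `S`) is bipartite. -/
def StronglyNonBipartite {α : Type*} (Γ : SimpleGraph α) (S : Set α) : Prop :=
  ∀ x ∈ S, ¬ ComponentBipartite Γ x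

/-- The graph `Γ` is bipartite. -/
def Bipartite {α : Type*} (Γ : SimpleGraph α) : Prop :=
  ∃ f : α → Bool, ∀ u v : α, Γ.Adj u v → f u ≠ f v

/-- `E_v`: the set of edges of `G` containing `v`. -/
def Ev (G : SimpleGraph U) (v : U) : Set (Sym2 U) := {e | e ∈ G.edgeSet ∧ v ∈ e}

/-- The graph `G(L,v)` on the edge set `E_v`: two distinct edges at `v` are
    adjacent if some cord of `L` has both on its path. -/
def covGraph (G : SimpleGraph U) (L : Set (Sym2 U)) (v : U) : SimpleGraph (Sym2 U) where
  Adj e e' := e ≠ e' ∧ e ∈ Ev G v ∧ e' ∈ Ev G v ∧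
    ∃ x y : U, s(x, y) ∈ L ∧ e ∈ pathEdges G x y ∧ e' ∈ pathEdges G x y
  symm := ⟨by
    rintro e e' ⟨hne, he, he', x, y, hc, hp, hp'⟩
    exact ⟨hne.symm, he', he, x, y, hc, hp', hp⟩⟩
  loopless := ⟨by rintro e ⟨hne, _⟩; exact hne rfl⟩

/-- `G(L,v)` is the complete graph on `E_v`. -/
def CompleteAt (G : SimpleGraph U) (L : Set (Sym2 U)) (v : U) : Prop :=
  ∀ e ∈ Ev G v, ∀ e' ∈ Ev G v, e ≠ e' → (covGraph G L v).Adj e e'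

/-- `L` is a `t`-cover of `G`. -/
def TCover (X : Set U) (G : SimpleGraph U) (L : Set (Sym2 U)) : Prop :=
  cup L = X ∧ ∀ v : U, Interior G v → CompleteAt G L v

/-- The graph `Γ(L, c)` for the cord `c = x x'`, with vertex set `X − {x,x'}`
    and edge set `L^(c)`. -/
def cordGraphC (X : Set U) (G : SimpleGraph U) (L : Set (Sym2 U)) (x x' : U) :
    SimpleGraph U where
  Adj y y' := y ≠ y' ∧ y ≠ x ∧ y ≠ x' ∧ y' ≠ x ∧ y' ≠ x' ∧
    s(y, y') ∈ L ∧ QuartetOf X G x x' y y' ∧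
    ((s(x, y) ∈ L ∧ s(x', y') ∈ L) ∨ (s(x, y') ∈ L ∧ s(x', y) ∈ L))
  symm := ⟨by
    rintro y y' ⟨hne, h1, h2, h3, h4, hL,
      ⟨hx1, hx2, hy1, hy2, ⟨d1, d2, d3, d4, d5, d6⟩, e, p1, p2, p3, p4⟩, hor⟩
    exact ⟨hne.symm, h3, h4, h1, h2, by rwa [Sym2.eq_swap],
      ⟨hx1, hx2, hy2, hy1, ⟨d1, d3, d2, d5, d4, d6.symm⟩, e, p2, p1, p4, p3⟩, hor.symm⟩⟩
  loopless := ⟨by rintro y ⟨hne, _⟩; exact hne rfl⟩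

/-- `v` lies on the path of `G` from `x` to `y`. -/
def OnPath (G : SimpleGraph U) (x y v : U) : Prop :=
  v = x ∨ v = y ∨ ∃ e ∈ pathEdges G x y, v ∈ e

/-- `v = med_G(a,b,c)`: `v` lies on all three pairwise paths. -/
def IsMedian (G : SimpleGraph U) (a b c v : U) : Prop :=
  OnPath G a b v ∧ OnPath G a c v ∧ OnPath G b c v

/-- `L` is a triplet cover of `G`. -/
def TripletCover (X : Set U) (G : SimpleGraph U) (L : Set (Sym2 U)) : Prop :=
  ∀ v : U, Interior G v → ∃ a b c : U, a ∈ X ∧ b ∈ X ∧ c ∈ X ∧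
    a ≠ b ∧ a ≠ c ∧ b ≠ c ∧
    s(a, b) ∈ L ∧ s(a, c) ∈ L ∧ s(b, c) ∈ L ∧ IsMedian G a b c v

/-- `L` is a pointed `x`-cover of `G`. -/
def PointedCover (X : Set U) (G : SimpleGraph U) (L : Set (Sym2 U)) (x : U) : Prop :=
  cup L = X ∧ (∀ v : U, Interior G v → CompleteAt G L v) ∧
    ∀ v : U, Interior G v → ∃ a b : U, a ≠ b ∧
      s(a, x) ∈ L ∧ s(b, x) ∈ L ∧ IsMedian G a b x v

/-- Every interior vertex has degree `3`. -/
def IsBinary (G : SimpleGraph U) : Prop := ∀ v : U, Interior G v → deg G v = 3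

/-- `a, b` form a `T`-cherry with common neighbour `v`. -/
def IsCherry (G : SimpleGraph U) (a b v : U) : Prop :=
  a ≠ b ∧ IsLeaf G a ∧ IsLeaf G b ∧ G.Adj a v ∧ G.Adj b v

/-- `a, b` form a proper `T`-cherry with common neighbour `v` of degree `3`. -/
def IsProperCherry (G : SimpleGraph U) (a b v : U) : Prop :=
  IsCherry G a b v ∧ deg G v = 3

/-- `W` is a `T`-core of `G`. -/
def IsCore (G : SimpleGraph U) (W : Set U) : Prop :=
  W.Nonempty ∧ W ⊆ G.support ∧
    (∀ a ∈ W, ∀ b ∈ W, (restrict G W).Reachable a b) ∧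
    ∀ v ∈ W, deg (restrict G W) v = 1 ∨ deg (restrict G W) v = deg G v

/-- `X_W`: the leaf set of the induced tree `T_W`. -/
def coreLeaves (G : SimpleGraph U) (W : Set U) : Set U :=
  {v | v ∈ W ∧ deg (restrict G W) v = 1}

/-- `g` is the gate of `x` in `W`: the vertex of `W` closest to `x`. -/
def IsGate (G : SimpleGraph U) (W : Set U) (x g : U) : Prop :=
  g ∈ W ∧ ∀ w ∈ W, OnPath G x w g

/-- `L_W`: the cords induced on the gates. -/
def gateCords (G : SimpleGraph U) (W : Set U) (L : Set (Sym2 U)) : Set (Sym2 U) :=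
  {c | ∃ p q y y' : U, s(p, q) ∈ L ∧ IsGate G W p y ∧ IsGate G W q y' ∧
       y ≠ y' ∧ c = s(y, y')}

/-- The gate map of the cherry reduction: `a, b ↦ v`, all else fixed. -/
def cherryMap (a b v : U) : U → U := fun p => if p = a ∨ p = b then v else p

/-- `L_U` for the cherry reduction at the proper cherry `a,b` with neighbour `v`. -/
def cherryLU (L : Set (Sym2 U)) (a b v : U) : Set (Sym2 U) :=
  {c | ∃ p q : U, s(p, q) ∈ L ∧ cherryMap a b v p ≠ cherryMap a b v q ∧
       c = s(cherryMap a b v p, cherryMap a b v q)}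

/-- `X(a, L^{ab}) = {y : ay ∈ L − {ab}}`. -/
def sideSet (L : Set (Sym2 U)) (a b : U) : Set U :=
  {y | s(a, y) ∈ L ∧ s(a, y) ≠ s(a, b)}

/-- `Σ_{c ∈ LU} ρ(c)·λ^{TU}_c = 0` as a linear form on `ℝ^{E_U}`. -/
def RhoAnnihilates (TU : SimpleGraph U) (LU : Set (Sym2 U)) (ρ : Sym2 U → ℝ) : Prop :=
  ∀ η : Sym2 U → ℝ, (∀ e, e ∉ TU.edgeSet → η e = 0) →
    ∑ᶠ c ∈ LU, ρ c * pdist TU η c = 0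

/-- `D_ω(ab|cd)`. -/
def Dq (G : SimpleGraph U) (ω : Sym2 U → ℝ) (a b c d : U) : ℝ :=
  max (tdist G ω a c + tdist G ω b d) (tdist G ω a d + tdist G ω b c)
    - tdist G ω a b - tdist G ω c d

/-- The star tree on `X` with central vertex `z`. -/
def starGraph (X : Set U) (z : U) : SimpleGraph U :=
  SimpleGraph.fromEdgeSet {c | ∃ x ∈ X, c = s(x, z)}

/-- `A ∨ B`: all cords with one end in `A` and the other in `B`. -/
def vee (A B : Set U) : Set (Sym2 U) := {c | ∃ a ∈ A, ∃ b ∈ B, c = s(a, b)}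

/-- A `T`-shelling of `binom(X,2) − L` with cords `aᵢbᵢ` and pivots `pᵢ, qᵢ`. -/
def IsShelling (X : Set U) (G : SimpleGraph U) (L : Set (Sym2 U)) (m : ℕ)
    (a b p q : Fin m → U) : Prop :=
  (∀ i, a i ∈ X ∧ b i ∈ X ∧ a i ≠ b i ∧ s(a i, b i) ∉ L) ∧
  Function.Injective (fun i => s(a i, b i)) ∧
  (∀ x y : U, x ∈ X → y ∈ X → x ≠ y → s(x, y) ∉ L → ∃ i, s(x, y) = s(a i, b i)) ∧
  ∀ i : Fin m,
    p i ∈ X ∧ q i ∈ X ∧ p i ≠ q i ∧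
    p i ≠ a i ∧ p i ≠ b i ∧ q i ≠ a i ∧ q i ≠ b i ∧
    DisplaysQ G (a i) (p i) (b i) (q i) ∧
    ∀ u w : U, u ∈ ({a i, b i, p i, q i} : Set U) → w ∈ ({a i, b i, p i, q i} : Set U) →
      u ≠ w → s(u, w) ≠ s(a i, b i) →
      (s(u, w) ∈ L ∨ ∃ j : Fin m, j < i ∧ s(u, w) = s(a j, b j))

/-- `L` is an `s`-lasso for `G`. -/
def SLasso (X : Set U) (G : SimpleGraph U) (L : Set (Sym2 U)) : Prop :=
  cup L = X ∧ ∃ (m : ℕ) (a b p q : Fin m → U), IsShelling X G L m a b p q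

/-- `L'_{A,B}` of Corollary 3 (the cherry construction). -/
def LAB (L' : Set (Sym2 U)) (X : Set U) (a b : U) (A B : Set U) : Set (Sym2 U) :=
  {c | c ∈ L' ∧ ∀ u ∈ c, u ∈ X ∧ u ≠ a ∧ u ≠ b} ∪
  {c | ∃ x ∈ A ∪ {b}, c = s(a, x)} ∪
  {c | ∃ x ∈ B, c = s(b, x)}

end Lasso

/-! If `Γ(L)` is disconnected, let `S` be a component. A perturbation `η` of the weighting that
is `1` on every edge which leaves every cord length unchanged contradicts the lasso property. An
edge on no cord path gives one, and so does a vertex of degree three two of whose edges lie on no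
common cord path (weights `1/2, 1/2, -1/2`, the last on the third edge). So every leaf lies in a
cord and any two edges at an interior vertex lie on a common cord path: `L` is a t-cover. The
subtrees spanned by the cords inside `S` and outside `S` are then edge-disjoint, since at a leaf
of their intersection two edges would share no cord path. But on a walk from `S` to its
complement the edges leave the first subtree at some vertex, where again two edges share no cord
path. -/

namespace SimpleGraph

variable {V : Type*} {G : SimpleGraph V}

theorem edgeSet_finite_of_support_finite (h : G.support.Finite) : G.edgeSet.Finite := by
  refine ((h.prod h).image Sym2.mk.uncurry).subset ?_
  rw [← Set.sym2_eq_mk_image]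
  exact edgeSet_subset_sym2_iff.mpr subset_rfl

theorem IsAcyclic.exists_forall_adj_eq [Finite G.edgeSet] (hG : G.IsAcyclic) {u v : V}
    (huv : G.Adj u v) : ∃ a b, G.Adj a b ∧ ∀ c, G.Adj a c → c = b := by
  have : Nonempty V := ⟨u⟩
  obtain ⟨a, _, p, hp, hmax⟩ := Walk.exists_isPath_forall_isPath_length_le_length G
  have hnil : ¬ p.Nil := fun h => by
    have := hmax u v _ (Path.singleton huv).2
    simp [Path.singleton, Walk.length_eq_zero_iff.mpr h] at this
  refine ⟨a, p.snd, p.adj_snd hnil, fun c hac => hG.eq_snd_of_adj_start hp hac ?_⟩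
  by_contra hc
  have := hmax c _ _ (hp.cons hc (h := hac.symm))
  simp at this

theorem IsAcyclic.exists_forall_mem_eq {F : Set (Sym2 V)} (hG : G.IsAcyclic)
    (hFG : F ⊆ G.edgeSet) (hF : F.Finite) (hne : F.Nonempty) :
    ∃ u, ∃ e ∈ F, u ∈ e ∧ ∀ e' ∈ F, u ∈ e' → e' = e := by
  have hle : fromEdgeSet F ≤ G := (G.fromEdgeSet_le).mpr fun e he => hFG he.1
  have : Finite (fromEdgeSet F).edgeSet := (hF.subset fun e he => by
    rw [edgeSet_fromEdgeSet] at he; exact he.1).to_subtype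
  obtain ⟨⟨x, y⟩, he₀⟩ := hne
  have hxy : (fromEdgeSet F).Adj x y := (fromEdgeSet_adj F).mpr ⟨he₀, (hFG he₀).ne⟩
  obtain ⟨a, b, hab, hleaf⟩ := (hG.anti hle).exists_forall_adj_eq hxy
  refine ⟨a, s(a, b), ((fromEdgeSet_adj F).mp hab).1, Sym2.mem_mk_left a b, fun e' he' hae' => ?_⟩
  obtain ⟨c, rfl⟩ := Sym2.mem_iff_exists.mp hae'
  rw [hleaf c ((fromEdgeSet_adj F).mpr ⟨he', (hFG he').ne⟩)]

namespace Walk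

variable {a b : V}

theorem exists_mem_edges_of_ne (p : G.Walk a b) (hab : a ≠ b) : ∃ e ∈ p.edges, a ∈ e := by
  cases p with
  | nil => exact absurd rfl hab
  | cons h q => exact ⟨_, List.mem_cons_self .., Sym2.mem_mk_left ..⟩

theorem exists_mem_edges_of_ne' (p : G.Walk a b) (hab : a ≠ b) : ∃ e ∈ p.edges, b ∈ e := by
  simpa using p.reverse.exists_mem_edges_of_ne hab.symm

theorem IsPath.exists_ne_mem_edges {p : G.Walk a b} (hp : p.IsPath) {e : Sym2 V} {u : V}
    (he : e ∈ p.edges) (hu : u ∈ e) (hua : u ≠ a) (hub : u ≠ b) :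
    ∃ e' ∈ p.edges, e' ≠ e ∧ u ∈ e' := by
  obtain ⟨q, r, -, -, rfl⟩ :=
    hp.mem_support_iff_exists_append.mp (p.mem_support_of_mem_edges he hu)
  obtain ⟨e₁, he₁, hu₁⟩ := q.exists_mem_edges_of_ne' hua.symm
  obtain ⟨e₂, he₂, hu₂⟩ := r.exists_mem_edges_of_ne hub
  have hdisj := List.disjoint_of_nodup_append (by simpa using hp.isTrail.edges_nodup)
  by_cases h₁ : e₁ = e
  · exact ⟨e₂, by simp [he₂], fun h => hdisj he₁ (h₁ ▸ h ▸ he₂), hu₂⟩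
  · exact ⟨e₁, by simp [he₁], h₁, hu₁⟩

theorem exists_edges_switch (R : Sym2 V → Prop) (p : G.Walk a b)
    (he : ∃ e ∈ p.edges, R e) (hf : ∃ f ∈ p.edges, ¬ R f) :
    ∃ u, ∃ e ∈ p.edges, ∃ f ∈ p.edges, u ∈ e ∧ u ∈ f ∧ R e ∧ ¬ R f := by
  induction p with
  | nil => simp at he
  | @cons a c b h q ih =>
    by_cases hq : (∃ e ∈ q.edges, R e) ∧ ∃ f ∈ q.edges, ¬ R f
    · obtain ⟨u, e, he, f, hf, hue, huf, hRe, hRf⟩ := ih hq.1 hq.2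
      exact ⟨u, e, by simp [he], f, by simp [hf], hue, huf, hRe, hRf⟩
    cases q with
    | nil => simp at he hf; exact absurd he hf
    | @cons _ d _ h' q' =>
      -- `R` is constant on the edges of `q`, so `s(a, c)` and `s(c, d)` disagree
      simp only [edges_cons, List.mem_cons, exists_eq_or_imp] at he hf hq
      by_cases hR : R s(c, d)
      · exact ⟨c, s(c, d), by simp, s(a, c), by simp, by simp, by simp, hR, by grind⟩
      · exact ⟨c, s(a, c), by simp, s(c, d), by simp, by simp, by simp, by grind, hR⟩

end Walk

end SimpleGraph

namespace Lasso

open SimpleGraph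

variable {U : Type} {G : SimpleGraph U} {X : Set U} {L : Set (Sym2 U)} {S : Set U}
  {a b u v : U} {e f : Sym2 U}

theorem mem_Ev : e ∈ Ev G v ↔ ∃ w, G.Adj v w ∧ e = s(v, w) := by
  constructor
  · rintro ⟨he, hv⟩
    obtain ⟨w, rfl⟩ := Sym2.mem_iff_exists.mp hv
    exact ⟨w, he, rfl⟩
  · rintro ⟨w, hw, rfl⟩
    exact ⟨hw, Sym2.mem_mk_left v w⟩

theorem IsLeaf.eq_of_mem_Ev (hv : IsLeaf G v) (he : e ∈ Ev G v) (hf : f ∈ Ev G v) : e = f := by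
  obtain ⟨w, hw⟩ := Set.ncard_eq_one.mp hv
  obtain ⟨a, ha, rfl⟩ := mem_Ev.mp he
  obtain ⟨b, hb, rfl⟩ := mem_Ev.mp hf
  have ha' : a ∈ G.neighborSet v := ha
  have hb' : b ∈ G.neighborSet v := hb
  rw [hw] at ha' hb'
  rw [ha', hb']

theorem exists_third_of_deg_eq_three (hv : deg G v = 3) (he : e ∈ Ev G v) (hf : f ∈ Ev G v)
    (hef : e ≠ f) : ∃ g ∈ Ev G v, g ≠ e ∧ g ≠ f ∧ ∀ d ∈ Ev G v, d = e ∨ d = f ∨ d = g := by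
  obtain ⟨a, ha, rfl⟩ := mem_Ev.mp he
  obtain ⟨b, hb, rfl⟩ := mem_Ev.mp hf
  have hab : a ≠ b := by rintro rfl; exact hef rfl
  have hfin : (G.neighborSet v).Finite := Set.finite_of_ncard_pos (by rw [← deg, hv]; norm_num)
  have hsub : {a, b} ⊆ G.neighborSet v := Set.insert_subset ha (Set.singleton_subset_iff.mpr hb)
  have hrest : (G.neighborSet v \ {a, b}).ncard = 1 := by
    rw [Set.ncard_sdiff hsub (hfin.subset hsub), ← deg, hv, Set.ncard_pair hab]
  obtain ⟨c, hc⟩ := Set.ncard_eq_one.mp hrest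
  have hc' : c ∈ G.neighborSet v \ {a, b} := hc ▸ rfl
  simp only [Set.mem_sdiff, Set.mem_insert_iff, Set.mem_singleton_iff, not_or] at hc'
  refine ⟨s(v, c), mem_Ev.mpr ⟨c, hc'.1, rfl⟩, ?_, ?_, fun d hd => ?_⟩
  · exact fun h => hc'.2.1 (Sym2.congr_right.mp h)
  · exact fun h => hc'.2.2 (Sym2.congr_right.mp h)
  obtain ⟨w, hw, rfl⟩ := mem_Ev.mp hd
  simp only [Sym2.congr_right]
  by_contra! hw'
  have : w ∈ G.neighborSet v \ {a, b} := ⟨hw, by simp [hw'.1, hw'.2.1]⟩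
  exact hw'.2.2 (by simpa [hc] using this)

theorem mem_pathEdges_iff (hG : G.IsAcyclic) {p : G.Walk a b} (hp : p.IsPath) :
    e ∈ pathEdges G a b ↔ e ∈ p.edges := by
  refine ⟨fun he => he.2 p, fun he => ⟨p.edges_subset_edgeSet he, fun q => ?_⟩⟩
  have hpq : p = q.bypass := congrArg Subtype.val
    ((hG.subsingleton_path a b).elim ⟨p, hp⟩ ⟨q.bypass, q.bypass_isPath⟩)
  exact q.edges_bypass_subset_edges (hpq ▸ he)

theorem pathEdges_finite (hfin : G.edgeSet.Finite) : (pathEdges G a b).Finite :=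
  hfin.subset fun _ he => he.1

theorem exists_mem_pathEdges_of_ne (hG : G.IsAcyclic) (hab : G.Reachable a b) (hne : a ≠ b) :
    ∃ e ∈ pathEdges G a b, a ∈ e := by
  obtain ⟨p, hp⟩ := hab.exists_isPath
  simpa only [mem_pathEdges_iff hG hp] using p.exists_mem_edges_of_ne hne

theorem exists_ne_mem_pathEdges (hG : G.IsAcyclic) (hab : G.Reachable a b)
    (he : e ∈ pathEdges G a b) (hu : u ∈ e) (hua : u ≠ a) (hub : u ≠ b) :
    ∃ e' ∈ pathEdges G a b, e' ≠ e ∧ u ∈ e' := by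
  obtain ⟨p, hp⟩ := hab.exists_isPath
  simp only [mem_pathEdges_iff hG hp] at he ⊢
  exact hp.exists_ne_mem_edges he hu hua hub

theorem IsLeaf.eq_or_eq_of_mem_pathEdges (hu : IsLeaf G u) (hG : G.IsAcyclic)
    (hab : G.Reachable a b) (he : e ∈ pathEdges G a b) (hue : u ∈ e) : u = a ∨ u = b := by
  by_contra! h
  obtain ⟨e', he', hne, hue'⟩ := exists_ne_mem_pathEdges hG hab he hue h.1 h.2
  exact hne (hu.eq_of_mem_Ev ⟨he'.1, hue'⟩ ⟨he.1, hue⟩)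

namespace IsXTree

theorem mem_iff_isLeaf (hT : IsXTree X G) : v ∈ X ↔ IsLeaf G v := by
  rw [hT.leaves_eq]; rfl

theorem mem_support (hT : IsXTree X G) (hv : v ∈ X) : v ∈ G.support := by
  obtain ⟨w, hw⟩ := Set.ncard_eq_one.mp ((hT.mem_iff_isLeaf).mp hv)
  exact (G.mem_support).mpr ⟨w, show w ∈ G.neighborSet v from hw ▸ rfl⟩

theorem reachable (hT : IsXTree X G) (ha : a ∈ X) (hb : b ∈ X) : G.Reachable a b :=
  hT.connected a (hT.mem_support ha) b (hT.mem_support hb)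

theorem edgeSet_finite (hT : IsXTree X G) : G.edgeSet.Finite :=
  edgeSet_finite_of_support_finite hT.support_finite

theorem interior_of_mem_Ev (hT : IsXTree X G) (he : e ∈ Ev G v) (hv : v ∉ X) :
    Interior G v := by
  obtain ⟨w, hw, -⟩ := mem_Ev.mp he
  exact ⟨(G.mem_support).mpr ⟨w, hw⟩, fun h => hv ((hT.mem_iff_isLeaf).mpr h)⟩

theorem eq_or_eq_of_mem_pathEdges (hT : IsXTree X G) (ha : a ∈ X) (hb : b ∈ X) (hu : u ∈ X)
    (he : e ∈ pathEdges G a b) (hue : u ∈ e) : u = a ∨ u = b :=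
  ((hT.mem_iff_isLeaf).mp hu).eq_or_eq_of_mem_pathEdges hT.acyclic (hT.reachable ha hb) he hue

theorem exists_ne_mem_pathEdges (hT : IsXTree X G) (ha : a ∈ X) (hb : b ∈ X) (hu : u ∉ X)
    (he : e ∈ pathEdges G a b) (hue : u ∈ e) : ∃ e' ∈ pathEdges G a b, e' ≠ e ∧ u ∈ e' :=
  Lasso.exists_ne_mem_pathEdges hT.acyclic (hT.reachable ha hb) he hue
    (by rintro rfl; exact hu ha) (by rintro rfl; exact hu hb)

end IsXTree

theorem IsCordSet.mem_left (hL : IsCordSet X L) (h : s(a, b) ∈ L) : a ∈ X :=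
  (hL _ h).2 a (Sym2.mem_mk_left a b)

theorem IsCordSet.mem_right (hL : IsCordSet X L) (h : s(a, b) ∈ L) : b ∈ X :=
  (hL _ h).2 b (Sym2.mem_mk_right a b)

theorem IsCordSet.ne (hL : IsCordSet X L) (h : s(a, b) ∈ L) : a ≠ b :=
  fun hab => (hL _ h).1 (Sym2.mk_isDiag_iff.mpr hab)

theorem tdist_add (hfin : G.edgeSet.Finite) (ω η : Sym2 U → ℝ) :
    tdist G (ω + η) a b = tdist G ω a b + tdist G η a b :=
  finsum_mem_add_distrib (pathEdges_finite hfin)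

theorem tdist_single (hfin : G.edgeSet.Finite) (e : Sym2 U) (c : ℝ) :
    tdist G (Pi.single e c) a b = if e ∈ pathEdges G a b then c else 0 := by
  rw [tdist, finsum_mem_eq_finite_toFinset_sum _ (pathEdges_finite hfin),
    Finset.sum_pi_single']
  simp

theorem isProperWeighting_indicator_add {η : Sym2 U → ℝ} (hz : ∀ e ∉ G.edgeSet, η e = 0)
    (hη : ∀ e, -1 < η e) : IsProperWeighting G (G.edgeSet.indicator 1 + η) := by
  refine ⟨⟨fun e => ?_, fun e he => by simp [he, hz e he]⟩, fun e he _ => ?_⟩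
  · by_cases he : e ∈ G.edgeSet
    · simp only [Pi.add_apply, Set.indicator_of_mem he, Pi.one_apply]; linarith [hη e]
    · simp [he, hz e he]
  · simp only [Pi.add_apply, Set.indicator_of_mem he, Pi.one_apply]; linarith [hη e]

/-- Compare the weighting that is `1` on every edge with its perturbation by `η`. -/
theorem EdgeWeightLasso.eq_zero_of_tdist_eq_zero (h : EdgeWeightLasso G L)
    (hfin : G.edgeSet.Finite) {η : Sym2 U → ℝ} (hz : ∀ e ∉ G.edgeSet, η e = 0)
    (hη : ∀ e, -1 < η e) (hL : ∀ a b, s(a, b) ∈ L → tdist G η a b = 0) : η = 0 := by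
  have h₀ := isProperWeighting_indicator_add (G := G) (η := 0) (fun _ _ => rfl)
    (fun _ => by norm_num)
  refine (add_left_cancel (h _ _ h₀ (isProperWeighting_indicator_add hz hη) ?_)).symm
  intro a b hab
  rw [tdist_add hfin, tdist_add hfin, hL a b hab]
  simp [tdist]

theorem EdgeWeightLasso.exists_cord_mem_pathEdges (h : EdgeWeightLasso G L)
    (hfin : G.edgeSet.Finite) (he : e ∈ G.edgeSet) :
    ∃ a b, s(a, b) ∈ L ∧ e ∈ pathEdges G a b := by
  by_contra! hno
  have := h.eq_zero_of_tdist_eq_zero hfin (η := Pi.single e (1 / 2)) (fun d hd => ?_)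
    (fun d => ?_) (fun a b hab => by simp [tdist_single hfin, hno a b hab])
  · simpa using congrFun this e
  · simp [show d ≠ e by rintro rfl; exact hd he]
  · simp only [Pi.single_apply]; split_ifs <;> norm_num

/-- If two edges `e`, `f` at `v` shared no cord path, the weights `1/2, 1/2, -1/2` on `e`, `f`
and the third edge would change no cord length: a cord path through `v` uses exactly two of its
edges, and never both `e` and `f`. -/
theorem EdgeWeightLasso.completeAt (h : EdgeWeightLasso G L) (hT : IsXTree X G)
    (hL : IsCordSet X L) (hvX : v ∉ X) (hv : deg G v = 3) : CompleteAt G L v := by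
  intro e he f hf hef
  refine ⟨hef, he, hf, ?_⟩
  by_contra! hno
  obtain ⟨g, hg, hge, -, hall⟩ := exists_third_of_deg_eq_three hv he hf hef
  have hfin := hT.edgeSet_finite
  have hpass : ∀ a b, s(a, b) ∈ L → ∀ d ∈ Ev G v, d ∈ pathEdges G a b →
      ∃ d' ∈ pathEdges G a b, d' ≠ d ∧ (d' = e ∨ d' = f ∨ d' = g) := by
    intro a b hab d hd hdP
    obtain ⟨d', hd'P, hne, hvd'⟩ :=
      hT.exists_ne_mem_pathEdges (hL.mem_left hab) (hL.mem_right hab) hvX hdP hd.2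
    exact ⟨d', hd'P, hne, hall d' ⟨hd'P.1, hvd'⟩⟩
  have := h.eq_zero_of_tdist_eq_zero hfin
    (η := Pi.single e (1 / 2) + Pi.single f (1 / 2) + Pi.single g (-1 / 2)) (fun d hd => ?_)
    (fun d => ?_) (fun a b hab => ?_)
  · simpa [hef, hge.symm] using congrFun this e
  · have hd' : ∀ c ∈ Ev G v, d ≠ c := fun c hc hdc => hd (hdc ▸ hc.1)
    simp [hd' e he, hd' f hf, hd' g hg]
  · simp only [Pi.add_apply, Pi.single_apply]
    split_ifs <;> norm_num
  · have hno' := hno a b hab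
    have hpe := hpass a b hab e he
    have hpf := hpass a b hab f hf
    have hpg := hpass a b hab g hg
    simp only [tdist_add hfin, tdist_single hfin]
    split_ifs <;> grind

theorem EdgeWeightLasso.cup_eq (h : EdgeWeightLasso G L) (hT : IsXTree X G)
    (hL : IsCordSet X L) : cup L = X := by
  ext x
  refine ⟨fun ⟨c, hc, hxc⟩ => (hL c hc).2 x hxc, fun hx => ?_⟩
  obtain ⟨w, hw⟩ := (G.mem_support).mp (hT.mem_support hx)
  obtain ⟨a, b, hab, hP⟩ := h.exists_cord_mem_pathEdges hT.edgeSet_finite (e := s(x, w)) hw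
  refine ⟨s(a, b), hab, ?_⟩
  rcases hT.eq_or_eq_of_mem_pathEdges (hL.mem_left hab) (hL.mem_right hab) hx hP
    (Sym2.mem_mk_left x w) with rfl | rfl <;> simp

theorem EdgeWeightLasso.tCover (h : EdgeWeightLasso G L) (hT : IsXTree X G) (hbin : IsBinary G)
    (hL : IsCordSet X L) : TCover X G L :=
  ⟨h.cup_eq hT hL, fun v hv =>
    h.completeAt hT hL (fun hvX => hv.2 ((hT.mem_iff_isLeaf).mp hvX)) (hbin v hv)⟩

def cordPathEdges (G : SimpleGraph U) (L : Set (Sym2 U)) (S : Set U) : Set (Sym2 U) :=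
  {e | ∃ a ∈ S, ∃ b ∈ S, s(a, b) ∈ L ∧ e ∈ pathEdges G a b}

theorem cordPathEdges_subset_edgeSet : cordPathEdges G L S ⊆ G.edgeSet :=
  fun _ ⟨_, _, _, _, _, hP⟩ => hP.1

theorem mem_of_mem_cordPathEdges (hT : IsXTree X G) (hL : IsCordSet X L)
    (he : e ∈ cordPathEdges G L S) (hue : u ∈ e) (hu : u ∈ X) : u ∈ S := by
  obtain ⟨a, ha, b, hb, hab, hP⟩ := he
  rcases hT.eq_or_eq_of_mem_pathEdges (hL.mem_left hab) (hL.mem_right hab) hu hP hue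
    with rfl | rfl <;> assumption

theorem exists_ne_mem_cordPathEdges (hT : IsXTree X G) (hL : IsCordSet X L)
    (he : e ∈ cordPathEdges G L S) (hue : u ∈ e) (hu : u ∉ X) :
    ∃ e' ∈ cordPathEdges G L S, e' ≠ e ∧ u ∈ e' := by
  obtain ⟨a, ha, b, hb, hab, hP⟩ := he
  obtain ⟨e', he', hne, hue'⟩ :=
    hT.exists_ne_mem_pathEdges (hL.mem_left hab) (hL.mem_right hab) hu hP hue
  exact ⟨e', ⟨a, ha, b, hb, hab, he'⟩, hne, hue'⟩

theorem CompleteAt.mem_cordPathEdges_compl (hv : CompleteAt G L v)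
    (hS : ∀ a b, s(a, b) ∈ L → (a ∈ S ↔ b ∈ S)) (he : e ∈ Ev G v) (hf : f ∈ Ev G v)
    (hef : e ≠ f) (hfS : f ∉ cordPathEdges G L S) : e ∈ cordPathEdges G L Sᶜ := by
  obtain ⟨-, -, -, a, b, hab, heP, hfP⟩ := hv e he f hf hef
  have ha : a ∉ S := fun ha => hfS ⟨a, ha, b, (hS a b hab).mp ha, hab, hfP⟩
  exact ⟨a, ha, b, fun hb => ha ((hS a b hab).mpr hb), hab, heP⟩

/-- At a leaf `u` of the forest of shared edges, the cord paths inside `S` and outside `S`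
through the shared edge would leave `u` along two different edges, which no cord path can
contain together. -/
theorem disjoint_cordPathEdges_compl (hT : IsXTree X G) (hL : IsCordSet X L)
    (hc : ∀ v, Interior G v → CompleteAt G L v) (hS : ∀ a b, s(a, b) ∈ L → (a ∈ S ↔ b ∈ S)) :
    Disjoint (cordPathEdges G L S) (cordPathEdges G L Sᶜ) := by
  rw [Set.disjoint_iff_inter_eq_empty, ← Set.not_nonempty_iff_eq_empty]
  intro hne
  obtain ⟨u, e₁, ⟨he₁S, he₁S'⟩, hue₁, huniq⟩ := hT.acyclic.exists_forall_mem_eq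
    (Set.inter_subset_left.trans cordPathEdges_subset_edgeSet)
    (hT.edgeSet_finite.subset (Set.inter_subset_left.trans cordPathEdges_subset_edgeSet)) hne
  have huX : u ∉ X := fun hu =>
    mem_of_mem_cordPathEdges hT hL he₁S' hue₁ hu (mem_of_mem_cordPathEdges hT hL he₁S hue₁ hu)
  obtain ⟨f, hfS, hfe, huf⟩ := exists_ne_mem_cordPathEdges hT hL he₁S hue₁ huX
  obtain ⟨g, hgS, hge, hug⟩ := exists_ne_mem_cordPathEdges hT hL he₁S' hue₁ huX
  have hfS' : f ∉ cordPathEdges G L Sᶜ := fun h => hfe (huniq f ⟨hfS, h⟩ huf)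
  have hgS' : g ∉ cordPathEdges G L S := fun h => hge (huniq g ⟨h, hgS⟩ hug)
  have hEf : f ∈ Ev G u := ⟨cordPathEdges_subset_edgeSet hfS, huf⟩
  have hEg : g ∈ Ev G u := ⟨cordPathEdges_subset_edgeSet hgS, hug⟩
  exact hfS' ((hc u (hT.interior_of_mem_Ev hEf huX)).mem_cordPathEdges_compl hS hEf hEg
    (by rintro rfl; exact hgS' hfS) hgS')

/-- Along a walk from `x` to `y`, the edges stop being used by cords inside `S` at some vertex,
and if the spanned subtrees were disjoint, the two edges there would share no cord path. -/
theorem TCover.not_disjoint_cordPathEdges_compl (hc : TCover X G L) (hT : IsXTree X G)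
    (hL : IsCordSet X L) (hS : ∀ a b, s(a, b) ∈ L → (a ∈ S ↔ b ∈ S)) {x y : U} (hx : x ∈ X)
    (hxS : x ∈ S) (hy : y ∈ X) (hyS : y ∉ S) :
    ¬ Disjoint (cordPathEdges G L S) (cordPathEdges G L Sᶜ) := by
  intro hdisj
  have hxy : x ≠ y := by rintro rfl; exact hyS hxS
  obtain ⟨w⟩ := hT.reachable hx hy
  obtain ⟨c, hcL, hxc⟩ : x ∈ cup L := hc.1 ▸ hx
  obtain ⟨q, rfl⟩ := Sym2.mem_iff_exists.mp hxc
  obtain ⟨ex, hexP, hxex⟩ := exists_mem_pathEdges_of_ne hT.acyclic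
    (hT.reachable hx (hL.mem_right hcL)) (hL.ne hcL)
  have hexS : ex ∈ cordPathEdges G L S := ⟨x, hxS, q, (hS x q hcL).mp hxS, hcL, hexP⟩
  obtain ⟨e₀, he₀w, hxe₀⟩ := w.exists_mem_edges_of_ne hxy
  obtain ⟨e₁, he₁w, hye₁⟩ := w.exists_mem_edges_of_ne' hxy
  have he₀ : e₀ = ex := ((hT.mem_iff_isLeaf).mp hx).eq_of_mem_Ev
    ⟨w.edges_subset_edgeSet he₀w, hxe₀⟩ ⟨hexP.1, hxex⟩
  obtain ⟨u, e, hew, f, hfw, hue, huf, heS, hfS⟩ :=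
    w.exists_edges_switch (· ∈ cordPathEdges G L S) ⟨e₀, he₀w, he₀ ▸ hexS⟩
      ⟨e₁, he₁w, fun h => hyS (mem_of_mem_cordPathEdges hT hL h hye₁ hy)⟩
  have hEe : e ∈ Ev G u := ⟨w.edges_subset_edgeSet hew, hue⟩
  have hEf : f ∈ Ev G u := ⟨w.edges_subset_edgeSet hfw, huf⟩
  have hef : e ≠ f := by rintro rfl; exact hfS heS
  have huX : u ∉ X := fun hu => hef (((hT.mem_iff_isLeaf).mp hu).eq_of_mem_Ev hEe hEf)
  exact hdisj.ne_of_mem heS ((hc.2 u (hT.interior_of_mem_Ev hEe huX)).mem_cordPathEdges_compl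
    hS hEe hEf hef hfS) rfl

theorem TCover.reachable (hc : TCover X G L) (hT : IsXTree X G) (hL : IsCordSet X L)
    {x y : U} (hx : x ∈ X) (hy : y ∈ X) : (fromEdgeSet L).Reachable x y := by
  by_contra hxy
  have hS : ∀ a b, s(a, b) ∈ L →
      (a ∈ {z | (fromEdgeSet L).Reachable x z} ↔ b ∈ {z | (fromEdgeSet L).Reachable x z}) := by
    intro a b hab
    have hadj : (fromEdgeSet L).Adj a b := (fromEdgeSet_adj L).mpr ⟨hab, hL.ne hab⟩
    exact ⟨fun h => h.trans hadj.reachable, fun h => h.trans hadj.symm.reachable⟩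
  exact hc.not_disjoint_cordPathEdges_compl hT hL hS hx Reachable.rfl hy hxy
    (disjoint_cordPathEdges_compl hT hL hc.2 hS)

theorem edgeWeightLasso_binary_connected_general {U : Type}
    (X : Set U) (G : SimpleGraph U)
    (hT : IsXTree X G)
    (hbin : IsBinary G)
    (L : Set (Sym2 U)) (hL : IsCordSet X L)
    (h : EdgeWeightLasso G L) :
    ∀ x ∈ X, ∀ y ∈ X, (SimpleGraph.fromEdgeSet L).Reachable x y :=
  fun _ hx _ hy => (h.tCover hT hbin hL).reachable hT hL hx hy

/-- Corollary 3: if `L` is an edge-weight lasso for a binary `X`-tree `T`,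
then the graph `Γ(L) = (X, L)` is connected. -/
theorem edgeWeightLasso_binary_connected {U : Type}
    (X : Set U) (G : SimpleGraph U)
    (hXfin : X.Finite) (hX3 : 3 ≤ X.ncard) (hT : IsXTree X G)
    (hbin : IsBinary G)
    (L : Set (Sym2 U)) (hL : IsCordSet X L)
    (h : EdgeWeightLasso G L) :
    ∀ x ∈ X, ∀ y ∈ X, (SimpleGraph.fromEdgeSet L).Reachable x y :=
  edgeWeightLasso_binary_connected_general X G hT hbin L hL h

end Lasso
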